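/- Let Q ∈ ℝ^{n×n} be symmetric positive definite with smallest eigenvalue λ₁ > 0, and let Y₁, …, Yₙ ∈ ℂ^{m×m} and an invertible F ∈ ℂ^{m×m} be given. If max_i ‖F⁻¹ Yᵢ‖ < λ₁ (operator norm), then the operator norm of (Q ⊗ F)⁻¹ · diag(Y₁, …, Yₙ) is strictly less than 1. -/

import Mathlib

/-!
Since `(Q ⊗ F)⁻¹ = (Q⁻¹ ⊗ I)(I ⊗ F⁻¹)`, the matrix in question factors as the block-diagonal
matrix `diag(Q⁻¹, …, Q⁻¹)` times a permuted copy of `diag(F⁻¹Y₁, …, F⁻¹Yₙ)`. The operator norm of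
a block-diagonal matrix is at most the largest norm of its blocks and permutations of coordinates
are isometries, so the norm is at most `‖Q⁻¹‖ · maxᵢ ‖F⁻¹Yᵢ‖ < λ₁⁻¹ · λ₁ = 1`, where
`‖Q⁻¹‖ ≤ λ₁⁻¹` comes from diagonalising `Q` by a (real, hence complex) orthogonal matrix.
-/

open Matrix Kronecker

/-- Operator norm of a matrix induced by the Euclidean (ℓ²) norms,
i.e. the largest singular value. -/
noncomputable def opNorm {𝕜 : Type*} [RCLike 𝕜] {k n : Type*} [Fintype k] [Fintype n]
    [DecidableEq n] (M : Matrix k n 𝕜) : ℝ :=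
  ‖LinearMap.toContinuousLinearMap (Matrix.toEuclideanLin M)‖

open scoped Matrix.Norms.L2Operator

lemma opNorm_eq_norm {𝕜 : Type*} [RCLike 𝕜] {k l : Type*} [Fintype k] [Fintype l] [DecidableEq l]
    (M : Matrix k l 𝕜) : opNorm M = ‖M‖ :=
  rfl

namespace Matrix

section L2OpNorm

variable {𝕜 : Type*} [RCLike 𝕜] {m n o : Type*} [Fintype m] [Fintype n] [Fintype o]

lemma sum_norm_sq_mulVec_le [DecidableEq n] (A : Matrix m n 𝕜) (v : n → 𝕜) :
    ∑ a, ‖(A *ᵥ v) a‖ ^ 2 ≤ ‖A‖ ^ 2 * ∑ b, ‖v b‖ ^ 2 := by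
  have h := pow_le_pow_left₀ (norm_nonneg _) (l2_opNorm_mulVec A (WithLp.toLp 2 v)) 2
  rwa [mul_pow, EuclideanSpace.norm_sq_eq, EuclideanSpace.norm_sq_eq] at h

omit [Fintype m] in
lemma blockDiagonal_mulVec_apply [DecidableEq o] (Z : o → Matrix m n 𝕜) (x : n × o → 𝕜)
    (a : m) (i : o) : (blockDiagonal Z *ᵥ x) (a, i) = (Z i *ᵥ fun b => x (b, i)) a := by
  simp [mulVec, dotProduct, blockDiagonal_apply, Fintype.sum_prod_type, ite_mul]

lemma l2_opNorm_blockDiagonal_le [DecidableEq n] [DecidableEq o] (Z : o → Matrix m n 𝕜)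
    {c : ℝ} (hc : 0 ≤ c) (hZ : ∀ i, ‖Z i‖ ≤ c) : ‖blockDiagonal Z‖ ≤ c := by
  rw [l2_opNorm_def]
  refine ContinuousLinearMap.opNorm_le_bound _ hc fun x => ?_
  refine (sq_le_sq₀ (by positivity) (by positivity)).mp ?_
  calc ‖_‖ ^ 2 = ∑ i, ∑ a, ‖(Z i *ᵥ fun b => x (b, i)) a‖ ^ 2 := by
        rw [EuclideanSpace.norm_sq_eq, Fintype.sum_prod_type_right]
        simp only [← blockDiagonal_mulVec_apply]
        rfl
    _ ≤ ∑ i, c ^ 2 * ∑ b, ‖x (b, i)‖ ^ 2 := by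
        gcongr with i
        exact (sum_norm_sq_mulVec_le _ _).trans (by gcongr; exact hZ i)
    _ = (c * ‖x‖) ^ 2 := by
        rw [← Finset.mul_sum, mul_pow, EuclideanSpace.norm_sq_eq, Fintype.sum_prod_type_right]

lemma l2_opNorm_reindex {m' n' : Type*} [Fintype m'] [Fintype n'] [DecidableEq n]
    [DecidableEq n'] (e₁ : m ≃ m') (e₂ : n ≃ n') (A : Matrix m n 𝕜) :
    ‖reindex e₁ e₂ A‖ = ‖A‖ := by
  have h : toEuclideanLin.trans LinearMap.toContinuousLinearMap (reindex e₁ e₂ A) =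
      ((LinearIsometryEquiv.piLpCongrLeft 2 𝕜 𝕜 e₁).toContinuousLinearEquiv : _ →L[𝕜] _).comp
        ((toEuclideanLin.trans LinearMap.toContinuousLinearMap A).comp
          ((LinearIsometryEquiv.piLpCongrLeft 2 𝕜 𝕜 e₂).symm.toContinuousLinearEquiv :
            _ →L[𝕜] _)) := by
    ext x i
    simp [mulVec, dotProduct]
  rw [l2_opNorm_def, l2_opNorm_def, h, ContinuousLinearMap.opNorm_linearIsometryEquiv_comp,
    ContinuousLinearMap.opNorm_comp_linearIsometryEquiv]

lemma l2_opNorm_unitary_mul_mul_star [DecidableEq n] (U : unitary (Matrix n n 𝕜))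
    (A : Matrix n n 𝕜) : ‖(U : Matrix n n 𝕜) * A * star (U : Matrix n n 𝕜)‖ = ‖A‖ := by
  rw [← Unitary.coe_star, CStarRing.norm_mul_coe_unitary, CStarRing.norm_coe_unitary_mul]

end L2OpNorm

variable {m n : Type*} [Fintype m] [Fintype n] [DecidableEq n]

lemma inv_unitary_mul_mul_star {α : Type*} [CommRing α] [StarRing α]
    (U : unitary (Matrix n n α)) (A : Matrix n n α) :
    ((U : Matrix n n α) * A * star (U : Matrix n n α))⁻¹ =
      U * A⁻¹ * star (U : Matrix n n α) := by
  rw [mul_inv_rev, mul_inv_rev, inv_eq_left_inv (Unitary.mul_star_self_of_mem U.2),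
    inv_eq_left_inv (Unitary.star_mul_self_of_mem U.2), mul_assoc]

omit [Fintype n] [DecidableEq n] in
lemma star_map_ofReal (U : Matrix n n ℝ) : star (U.map ((↑) : ℝ → ℂ)) = (star U).map (↑) :=
  (conjTranspose_map _ fun a => (Complex.conj_ofReal a).symm).symm

omit [DecidableEq n] in
lemma map_ofReal_mul (A B : Matrix n n ℝ) :
    (A * B).map ((↑) : ℝ → ℂ) = A.map (↑) * B.map (↑) :=
  Matrix.map_mul (f := Complex.ofRealHom)

lemma map_ofReal_mem_unitary {U : Matrix n n ℝ} (hU : U ∈ unitary (Matrix n n ℝ)) :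
    U.map ((↑) : ℝ → ℂ) ∈ unitary (Matrix n n ℂ) := by
  obtain ⟨h1, h2⟩ := Unitary.mem_iff.mp hU
  have hone : (1 : Matrix n n ℝ).map ((↑) : ℝ → ℂ) = 1 :=
    Matrix.map_one _ Complex.ofReal_zero Complex.ofReal_one
  rw [Unitary.mem_iff, star_map_ofReal, ← map_ofReal_mul, ← map_ofReal_mul, h1, h2, hone]
  exact ⟨rfl, rfl⟩

lemma IsHermitian.exists_map_ofReal_eq {Q : Matrix n n ℝ} (hQ : Q.IsHermitian) :
    ∃ U : unitary (Matrix n n ℂ), Q.map (↑) =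
      (U : Matrix n n ℂ) * diagonal (fun i => (hQ.eigenvalues i : ℂ)) * star (U : Matrix n n ℂ) := by
  refine ⟨⟨_, map_ofReal_mem_unitary hQ.eigenvectorUnitary.2⟩, ?_⟩
  conv_lhs => rw [hQ.spectral_theorem, Unitary.conjStarAlgAut_apply]
  rw [map_ofReal_mul, map_ofReal_mul, diagonal_map Complex.ofReal_zero, star_map_ofReal]
  rfl

lemma IsHermitian.l2_opNorm_inv_map_ofReal_le {Q : Matrix n n ℝ} (hQ : Q.IsHermitian) {lam : ℝ}
    (hlam : 0 < lam) (hlb : ∀ i, lam ≤ hQ.eigenvalues i) :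
    ‖(Q.map ((↑) : ℝ → ℂ))⁻¹‖ ≤ lam⁻¹ := by
  obtain ⟨U, hU⟩ := hQ.exists_map_ofReal_eq
  have hpos i : 0 < hQ.eigenvalues i := hlam.trans_le (hlb i)
  have hinv : (diagonal fun i => (hQ.eigenvalues i : ℂ))⁻¹ =
      diagonal fun i => (hQ.eigenvalues i : ℂ)⁻¹ :=
    inv_eq_left_inv <| by
      simp [diagonal_mul_diagonal, inv_mul_cancel₀ (Complex.ofReal_ne_zero.mpr (hpos _).ne')]
  rw [hU, inv_unitary_mul_mul_star, l2_opNorm_unitary_mul_mul_star, hinv, l2_opNorm_diagonal]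
  refine (pi_norm_le_iff_of_nonneg (by positivity)).mpr fun i => ?_
  rw [norm_inv, Complex.norm_real, Real.norm_of_nonneg (hpos i).le]
  exact inv_anti₀ hlam (hlb i)

lemma kronecker_mul_reindex_blockDiagonal {α : Type*} [CommSemiring α] [DecidableEq m]
    (A : Matrix n n α) (B : Matrix m m α) (Y : n → Matrix m m α) :
    A ⊗ₖ B * reindex (.prodComm m n) (.prodComm m n) (blockDiagonal Y) =
      blockDiagonal (fun _ : m => A) *
        reindex (.prodComm m n) (.prodComm m n) (blockDiagonal fun i => B * Y i) := by
  have hA : A ⊗ₖ (1 : Matrix m m α) = blockDiagonal fun _ => A := by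
    rw [← diagonal_one, kronecker_diagonal]; simp
  have hB : (1 : Matrix n n α) ⊗ₖ B =
      reindex (.prodComm m n) (.prodComm m n) (blockDiagonal fun _ => B) := by
    rw [← diagonal_one, diagonal_kronecker]; simp
  have hAB : A ⊗ₖ B = A ⊗ₖ (1 : Matrix m m α) * (1 : Matrix n n α) ⊗ₖ B := by
    rw [← mul_kronecker_mul, mul_one, one_mul]
  rw [hAB, hA, hB, mul_assoc]
  simp only [reindex_apply, submatrix_mul_equiv, blockDiagonal_mul]

end Matrix

theorem stmt_6_general {n m : Type*} [Fintype n] [DecidableEq n] [Nonempty n]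
    [Fintype m] [DecidableEq m]
    (Q : Matrix n n ℝ) (hQ : Q.IsHermitian)
    (lam1 : ℝ) (hlam_pos : 0 < lam1)
    (hlb : ∀ i, lam1 ≤ hQ.eigenvalues i)
    (F : Matrix m m ℂ)
    (Y : n → Matrix m m ℂ)
    (hY : ∀ i, opNorm (F⁻¹ * Y i) < lam1) :
    opNorm (((Q.map (fun x : ℝ => (x : ℂ))) ⊗ₖ F)⁻¹ * Matrix.reindex (Equiv.prodComm m n) (Equiv.prodComm m n) (Matrix.blockDiagonal Y)) < 1 := by
  simp only [opNorm_eq_norm] at hY ⊢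
  obtain ⟨i₀, hi₀⟩ := Finite.exists_max fun i => ‖F⁻¹ * Y i‖
  have hQinv := hQ.l2_opNorm_inv_map_ofReal_le hlam_pos hlb
  rw [inv_kronecker, kronecker_mul_reindex_blockDiagonal]
  calc _ ≤ ‖blockDiagonal fun _ : m => (Q.map ((↑) : ℝ → ℂ))⁻¹‖ *
        ‖reindex (.prodComm m n) (.prodComm m n) (blockDiagonal fun i => F⁻¹ * Y i)‖ :=
        l2_opNorm_mul _ _
    _ ≤ lam1⁻¹ * ‖F⁻¹ * Y i₀‖ := by
        gcongr
        · exact l2_opNorm_blockDiagonal_le _ (by positivity) fun _ => hQinv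
        · rw [l2_opNorm_reindex]
          exact l2_opNorm_blockDiagonal_le _ (norm_nonneg _) hi₀
    _ < lam1⁻¹ * lam1 := by gcongr; exact hY i₀
    _ = 1 := inv_mul_cancel₀ hlam_pos.ne'

/-- Decentralized small-gain bound: if ‖F⁻¹ Yᵢ‖ < λ₁ for every i, then
‖(Q ⊗ F)⁻¹ · diag(Y₁,…,Yₙ)‖ < 1. -/
theorem stmt_6 {n m : Type*} [Fintype n] [DecidableEq n] [Nonempty n]
    [Fintype m] [DecidableEq m] [Nonempty m]
    (Q : Matrix n n ℝ) (hQ : Q.IsHermitian) (hPD : Q.PosDef)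
    (lam1 : ℝ) (hlam_pos : 0 < lam1)
    (hmem : ∃ i, hQ.eigenvalues i = lam1)
    (hlb : ∀ i, lam1 ≤ hQ.eigenvalues i)
    (F : Matrix m m ℂ) (hF : IsUnit F.det)
    (Y : n → Matrix m m ℂ)
    (hY : ∀ i, opNorm (F⁻¹ * Y i) < lam1) :
    opNorm (((Q.map (fun x : ℝ => (x : ℂ))) ⊗ₖ F)⁻¹ * Matrix.reindex (Equiv.prodComm m n) (Equiv.prodComm m n) (Matrix.blockDiagonal Y)) < 1 :=
  stmt_6_general Q hQ lam1 hlam_pos hlb F Y hY
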